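/- arXiv:2405.05544 — 3 statements merged into one kernel-verified Lean document; each statement's English description precedes it below -/
import Mathlib

section
/- Let n ≥ 3 and let c ∈ ℤ^n satisfy c_1 ≥ c_2 ≥ ⋯ ≥ c_n ≥ 0. Then the minimum of |p(S)·c| over all subsets S of {1,…,n} equals the minimum of |p(S)·c| over all subsets S of {1,…,n} with p(S) ∈ Q(n); in other words, the optimum of the partition problem is always attained at a subset S with p(S) ∈ Q(n). -/
open Finset

/-- Cumulative sum: `x 0 + ... + x k`. -/
def cum {n : ℕ} (x : Fin n → ℤ) (k : Fin n) : ℤ := ∑ i ∈ Finset.Iic k, x i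

/-- The partial order `⪯`: every partial sum of `x` is at most that of `y`. -/
def ple {n : ℕ} (x y : Fin n → ℤ) : Prop := ∀ k : Fin n, cum x k ≤ cum y k

/-- Membership in `P(n)`: all entries are `1` or `-1`. -/
def isPM {n : ℕ} (v : Fin n → ℤ) : Prop := ∀ i, v i = 1 ∨ v i = -1

/-- Membership in `Q(n)`. -/
def inQ {n : ℕ} (v : Fin n → ℤ) : Prop := isPM v ∧ ¬ ple v 0 ∧ ¬ ple 0 v

/-- Standard inner product on `ℤ^n`. -/
def dotp {n : ℕ} (x y : Fin n → ℤ) : ℤ := ∑ i, x i * y i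

/-- The ±1 vector of a subset `S`. -/
def pS {n : ℕ} (S : Finset (Fin n)) : Fin n → ℤ := fun i => if i ∈ S then 1 else -1

/-- The vector `m_k`: first `k` entries 1, next `k+1` entries −1, rest 1 (0-indexed). -/
def mvec (n k : ℕ) : Fin n → ℤ := fun i => if i.val < k then 1 else if i.val < 2 * k + 1 then -1 else 1

/-- An instance of the partition problem: `c_1 ≥ c_2 ≥ ⋯ ≥ c_n ≥ 0`. -/
def monoc {n : ℕ} (c : Fin n → ℤ) : Prop := (∀ i j : Fin n, i ≤ j → c j ≤ c i) ∧ ∀ i, 0 ≤ c i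

/-!
Summation by parts shows that `x ⪯ y` implies `x ⬝ c ≤ y ⬝ c` for every instance `c`. Take a
minimiser `p(S)` of `|p(S) ⬝ c|`. If it is not in `Q(n)` then, after replacing `S` by its
complement, `0 ⪯ p(S)`, so `p(S) ⬝ c ≥ 0`. Let `j` be the first index outside `S` (or `n` if there
is none). Moving the leading `1` of `p(S)` to position `j` gives `p(T) = p(S) - 2u` with
`u = e₀ - e_j` and `0 ⪯ u ⪯ p(S)`, hence `0 ≤ u ⬝ c ≤ p(S) ⬝ c` and `|p(T) ⬝ c| ≤ p(S) ⬝ c`.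
The first partial sum of `p(T)` is `-1` and its third is `1` (by parity, or because `p(S)` starts
with `1, 1, 1`), so `p(T) ∈ Q(n)`.
-/

theorem sum_range_mul_nonneg_of_antitoneOn {R : Type*} [CommRing R] [LinearOrder R]
    [IsStrictOrderedRing R] {f g : ℕ → R} {n : ℕ} (hf : AntitoneOn f (Set.Iio n))
    (hf0 : ∀ i < n, 0 ≤ f i) (hg : ∀ k < n, 0 ≤ ∑ i ∈ range (k + 1), g i) :
    0 ≤ ∑ i ∈ range n, f i * g i := by
  rcases Nat.eq_zero_or_pos n with rfl | hn
  · simp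
  have hlast : 0 ≤ f (n - 1) * ∑ i ∈ range n, g i := by
    refine mul_nonneg (hf0 _ (by omega)) ?_
    simpa [Nat.sub_add_cancel hn] using hg (n - 1) (by omega)
  have hsteps : ∑ i ∈ range (n - 1), (f (i + 1) - f i) * ∑ l ∈ range (i + 1), g l ≤ 0 := by
    refine sum_nonpos fun i hi => mul_nonpos_of_nonpos_of_nonneg ?_ (hg i ?_)
    · rw [mem_range] at hi
      exact sub_nonpos.2 (hf (by simp; omega) (by simp; omega) (by omega))
    · rw [mem_range] at hi
      omega
  have := sum_range_by_parts f g n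
  simp only [smul_eq_mul] at this
  linarith

section
variable {n : ℕ}

lemma extend_val_apply (x : Fin n → ℤ) {i : ℕ} (h : i < n) :
    Function.extend Fin.val x 0 i = x ⟨i, h⟩ :=
  Fin.val_injective.extend_apply x 0 ⟨i, h⟩

lemma cum_eq_sum_range (x : Fin n → ℤ) (k : Fin n) :
    cum x k = ∑ i ∈ range (k + 1), Function.extend Fin.val x 0 i := by
  rw [cum, Nat.range_succ_eq_Iic, ← Fin.map_valEmbedding_Iic, sum_map]
  simp [Fin.val_injective.extend_apply]

lemma dotp_eq_sum_range (x y : Fin n → ℤ) :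
    dotp x y = ∑ i ∈ range n, Function.extend Fin.val x 0 i * Function.extend Fin.val y 0 i := by
  rw [dotp, ← Fin.sum_univ_eq_sum_range]
  simp [Fin.val_injective.extend_apply]

lemma dotp_eq_dotProduct (x y : Fin n → ℤ) : dotp x y = x ⬝ᵥ y := rfl

lemma cum_zero (k : Fin n) : cum 0 k = 0 := sum_const_zero

lemma cum_sub (x y : Fin n → ℤ) (k : Fin n) : cum (x - y) k = cum x k - cum y k :=
  sum_sub_distrib _ _

lemma cum_neg (x : Fin n → ℤ) (k : Fin n) : cum (-x) k = -cum x k :=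
  sum_neg_distrib _

lemma cum_smul (a : ℤ) (x : Fin n → ℤ) (k : Fin n) : cum (a • x) k = a * cum x k :=
  (mul_sum _ _ _).symm

lemma zero_ple_iff {x : Fin n → ℤ} : ple 0 x ↔ ∀ k, 0 ≤ cum x k := by
  simp [ple, cum_zero]

lemma zero_ple_neg_iff {x : Fin n → ℤ} : ple 0 (-x) ↔ ple x 0 := by
  simp [ple, cum_zero, cum_neg]

theorem dotp_nonneg_of_zero_ple {x c : Fin n → ℤ} (hx : ple 0 x) (hc : monoc c) :
    0 ≤ dotp x c := by
  rw [dotp_eq_dotProduct, dotProduct_comm, ← dotp_eq_dotProduct, dotp_eq_sum_range]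
  refine sum_range_mul_nonneg_of_antitoneOn ?_ ?_ ?_
  · intro i hi j hj hij
    rw [extend_val_apply c hi, extend_val_apply c hj]
    exact hc.1 _ _ (Fin.mk_le_mk.2 hij)
  · intro i hi
    rw [extend_val_apply c hi]
    exact hc.2 _
  · intro k hk
    simpa [cum_eq_sum_range] using zero_ple_iff.1 hx ⟨k, hk⟩

theorem dotp_le_dotp_of_ple {x y c : Fin n → ℤ} (h : ple x y) (hc : monoc c) :
    dotp x c ≤ dotp y c := by
  have := dotp_nonneg_of_zero_ple (x := y - x) (zero_ple_iff.2 fun k => by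
    rw [cum_sub]; linarith [h k]) hc
  rw [dotp_eq_dotProduct, sub_dotProduct] at this
  exact sub_nonneg.1 this

theorem abs_dotp_sub_two_smul_le {u v c : Fin n → ℤ} (hu : ple 0 u) (huv : ple u v)
    (hc : monoc c) : |dotp (v - (2 : ℤ) • u) c| ≤ dotp v c := by
  have h0 := dotp_nonneg_of_zero_ple hu hc
  have h1 := dotp_le_dotp_of_ple huv hc
  simp only [dotp_eq_dotProduct] at h0 h1 ⊢
  rw [sub_dotProduct, smul_dotProduct, smul_eq_mul, abs_le]
  constructor <;> linarith

lemma isPM_pS (S : Finset (Fin n)) : isPM (pS S) := fun i => by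
  unfold pS; split_ifs <;> simp

lemma pS_compl (S : Finset (Fin n)) : pS Sᶜ = -pS S := by
  ext i
  by_cases h : i ∈ S <;> simp [pS, h]

lemma abs_dotp_pS_compl (S : Finset (Fin n)) (c : Fin n → ℤ) :
    |dotp (pS Sᶜ) c| = |dotp (pS S) c| := by
  rw [pS_compl, dotp_eq_dotProduct, neg_dotProduct, abs_neg, dotp_eq_dotProduct]

theorem isPM.two_dvd_cum_sub {v : Fin n → ℤ} (hv : isPM v) (k : Fin n) :
    (2 : ℤ) ∣ cum v k - (k + 1) := by
  have : cum v k - (k + 1) = ∑ i ∈ Iic k, (v i - 1) := by simp [cum, sum_sub_distrib]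
  rw [this]
  exact dvd_sum fun i _ => by rcases hv i with h | h <;> simp [h]

lemma cum_pS_of_forall_le_mem {S : Finset (Fin n)} {k : Fin n} (h : ∀ i ≤ k, i ∈ S) :
    cum (pS S) k = k + 1 := by
  have hone : ∀ i ∈ Iic k, pS S i = 1 := fun i hi => if_pos (h i (mem_Iic.1 hi))
  rw [cum, sum_congr rfl hone]
  simp

lemma cum_mk_zero (x : Fin n → ℤ) (h : 0 < n) : cum x ⟨0, h⟩ = x ⟨0, h⟩ := by
  rw [cum_eq_sum_range, sum_range_one, extend_val_apply x h]

/-- The `m`-th unit vector; it is `0` when `n ≤ m`, so that `e₀ - e_j` with `j = n`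
covers the case `S = univ`. -/
def unitVec (n m : ℕ) : Fin n → ℤ := fun i => if (i : ℕ) = m then 1 else 0

lemma cum_unitVec (m : ℕ) (k : Fin n) : cum (unitVec n m) k = if m ≤ k then 1 else 0 := by
  split_ifs with hmk
  · rw [cum, sum_eq_single_of_mem (⟨m, by omega⟩ : Fin n) (mem_Iic.2 (Fin.le_def.2 hmk))]
    · simp [unitVec]
    · exact fun i _ hi => if_neg fun h => hi (Fin.ext h)
  · refine sum_eq_zero fun i hi => if_neg ?_
    have := Fin.le_def.1 (mem_Iic.1 hi)
    omega

theorem exists_first_nonmem (S : Finset (Fin n)) :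
    ∃ j ≤ n, (∀ i : Fin n, (i : ℕ) < j → i ∈ S) ∧ ∀ i : Fin n, (i : ℕ) = j → i ∉ S := by
  classical
  have hex : ∃ m, m = n ∨ ∃ h : m < n, (⟨m, h⟩ : Fin n) ∉ S := ⟨n, .inl rfl⟩
  refine ⟨Nat.find hex, Nat.find_min' hex (.inl rfl), fun i hi => ?_, fun i hi => ?_⟩
  · by_contra h
    exact Nat.find_min hex hi (.inr ⟨i.2, h⟩)
  · rcases Nat.find_spec hex with h | ⟨_, h⟩
    · exact absurd i.2 (by omega)
    · simpa [← hi] using h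

lemma mem_of_zero_ple_pS {S : Finset (Fin n)} (hS : ple 0 (pS S)) (i : Fin n) (hi : (i : ℕ) = 0) :
    i ∈ S := by
  obtain ⟨_, hlt⟩ := i
  subst hi
  by_contra h
  have := zero_ple_iff.1 hS ⟨0, hlt⟩
  rw [cum_mk_zero, pS, if_neg h] at this
  omega

lemma cum_unitVec_zero_sub (j : ℕ) (k : Fin n) :
    cum (unitVec n 0 - unitVec n j) k = if (k : ℕ) < j then 1 else 0 := by
  rw [cum_sub, cum_unitVec, cum_unitVec]
  split_ifs <;> omega

lemma zero_ple_unitVec_zero_sub (j : ℕ) : ple 0 (unitVec n 0 - unitVec n j) :=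
  zero_ple_iff.2 fun k => by
    rw [cum_unitVec_zero_sub j]
    split_ifs <;> omega

lemma pS_exchange {S : Finset (Fin n)} {j : ℕ} (hzero : ∀ i : Fin n, (i : ℕ) = 0 → i ∈ S)
    (hgap : ∀ i : Fin n, (i : ℕ) = j → i ∉ S) :
    pS {i | (i ∈ S ∧ (i : ℕ) ≠ 0) ∨ (i : ℕ) = j} =
      pS S - (2 : ℤ) • (unitVec n 0 - unitVec n j) := by
  ext i
  by_cases h0 : (i : ℕ) = 0
  · have hj : (i : ℕ) ≠ j := fun h => hgap i h (hzero i h0)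
    simp [unitVec, pS, h0, hzero i h0, h0 ▸ hj]
  by_cases hij : (i : ℕ) = j
  · subst hij
    simp [unitVec, pS, h0, hgap i rfl]
  · simp [unitVec, pS, h0, hij]

theorem exists_inQ_abs_dotp_le (hn : 3 ≤ n) {c : Fin n → ℤ} (hc : monoc c) {S : Finset (Fin n)}
    (hS : ple 0 (pS S)) : ∃ T : Finset (Fin n), inQ (pS T) ∧ |dotp (pS T) c| ≤ |dotp (pS S) c| := by
  have hzero := mem_of_zero_ple_pS hS
  obtain ⟨j, -, hpre, hgap⟩ := exists_first_nonmem S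
  have hj : 0 < j := Nat.pos_of_ne_zero fun h => hgap ⟨0, by omega⟩ h.symm (hzero _ rfl)
  have hprefix (k : Fin n) (hk : (k : ℕ) < j) : cum (pS S) k = k + 1 :=
    cum_pS_of_forall_le_mem fun i hi => hpre i ((Fin.le_def.1 hi).trans_lt hk)
  set u := unitVec n 0 - unitVec n j
  have huS : ple u (pS S) := fun k => by
    rw [cum_unitVec_zero_sub j]
    split_ifs with hk
    · rw [hprefix k hk]
      omega
    · exact zero_ple_iff.1 hS k
  set T : Finset (Fin n) := {i | (i ∈ S ∧ (i : ℕ) ≠ 0) ∨ (i : ℕ) = j}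
  have hT : pS T = pS S - (2 : ℤ) • u := pS_exchange hzero hgap
  have hcum_T (k : Fin n) : cum (pS T) k = cum (pS S) k - 2 * if (k : ℕ) < j then 1 else 0 := by
    rw [hT, cum_sub, cum_smul, cum_unitVec_zero_sub j]
  have hfirst : cum (pS T) ⟨0, by omega⟩ = -1 := by
    rw [hcum_T, if_pos hj, cum_mk_zero, pS, if_pos (hzero _ rfl)]
    norm_num
  have hthird : 0 < cum (pS T) ⟨2, by omega⟩ := by
    have hpar := (isPM_pS S).two_dvd_cum_sub ⟨2, by omega⟩
    have hnonneg := zero_ple_iff.1 hS ⟨2, by omega⟩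
    rw [hcum_T]
    split_ifs with hk
    · rw [hprefix _ hk]
      norm_num
    · push_cast at hpar
      omega
  refine ⟨T, ⟨isPM_pS T, fun h => ?_, fun h => ?_⟩, ?_⟩
  · linarith [h ⟨2, by omega⟩, cum_zero (n := n) ⟨2, by omega⟩]
  · linarith [zero_ple_iff.1 h ⟨0, by omega⟩]
  · rw [hT, abs_of_nonneg (dotp_nonneg_of_zero_ple hS hc)]
    exact abs_dotp_sub_two_smul_le (zero_ple_unitVec_zero_sub j) huS hc

end

theorem stmt15 {n : ℕ} (hn : 3 ≤ n) (c : Fin n → ℤ) (hc : monoc c) :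
    ∃ S : Finset (Fin n), inQ (pS S) ∧
      ∀ S' : Finset (Fin n), |dotp (pS S) c| ≤ |dotp (pS S') c| := by
  obtain ⟨S₀, -, hmin⟩ := exists_min_image univ (fun S => |dotp (pS S) c|) univ_nonempty
  by_cases hQ : inQ (pS S₀)
  · exact ⟨S₀, hQ, fun S' => hmin S' (mem_univ _)⟩
  obtain ⟨S, hS, hSS₀⟩ : ∃ S, ple 0 (pS S) ∧ |dotp (pS S) c| = |dotp (pS S₀) c| := by
    have : ple (pS S₀) 0 ∨ ple 0 (pS S₀) := by
      by_contra h
      exact hQ ⟨isPM_pS S₀, fun h' => h (.inl h'), fun h' => h (.inr h')⟩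
    rcases this with h | h
    · exact ⟨S₀ᶜ, by rwa [pS_compl, zero_ple_neg_iff], abs_dotp_pS_compl S₀ c⟩
    · exact ⟨S₀, h, rfl⟩
  obtain ⟨T, hTQ, hT⟩ := exists_inQ_abs_dotp_le hn hc hS
  exact ⟨T, hTQ, fun S' => (hT.trans hSS₀.le).trans (hmin S' (mem_univ _))⟩
end

section
/- Let c ∈ ℤ^n satisfy c_1 ≥ c_2 ≥ ⋯ ≥ c_n ≥ 0, and let S, S' be subsets of {1,…,n}. Then: (1) if p(S)·c ≥ 0 and either p(S') ⪯_P −p(S) or p(S) ⪯_P p(S'), then |p(S)·c| ≤ |p(S')·c|; (2) if p(S)·c ≤ 0 and either p(S') ⪯_P p(S) or −p(S) ⪯_P p(S'), then |p(S)·c| ≤ |p(S')·c|. -/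
open Finset

set_option maxRecDepth 2000 in
lemma key {n : ℕ} (x y c : Fin n → ℤ) (hc : monoc c) (h : ple x y) :
    dotp x c ≤ dotp y c := by
  classical
  set V : (Fin n → ℤ) → ℕ → ℤ := fun v i => if h : i < n then v ⟨i, h⟩ else 0 with hV
  set D : ℕ → ℤ := fun k => V c k - V c (k + 1) with hD
  have hCmono : ∀ k, V c (k + 1) ≤ V c k := by
    intro k
    by_cases h1 : k + 1 < n
    · have hk : k < n := Nat.lt_of_succ_lt h1
      simp only [hV, dif_pos h1, dif_pos hk]
      exact hc.1 ⟨k, hk⟩ ⟨k + 1, h1⟩ (by simp [Fin.le_def])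
    · by_cases h2 : k < n
      · simp only [hV, dif_neg h1, dif_pos h2]
        exact hc.2 _
      · simp [hV, dif_neg h1, dif_neg h2]
  have hD0 : ∀ k, 0 ≤ D k := fun k => sub_nonneg.2 (hCmono k)
  have hCtel : ∀ i, i < n → V c i = ∑ k ∈ Finset.Ico i n, D k := by
    intro i hi
    have h1 : ∑ k ∈ Finset.Ico i n, D k =
        ∑ k ∈ Finset.range n, D k - ∑ k ∈ Finset.range i, D k :=
      Finset.sum_Ico_eq_sub _ (le_of_lt hi)
    have h2 : ∀ m, ∑ k ∈ Finset.range m, D k = V c 0 - V c m := fun m =>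
      Finset.sum_range_sub' (fun k => V c k) m
    have hn : V c n = 0 := by simp [hV]
    rw [h1, h2, h2, hn]
    ring
  -- dotp as range sums
  have hdotp : ∀ v : Fin n → ℤ, dotp v c = ∑ i ∈ Finset.range n, V v i * V c i := by
    intro v
    rw [dotp, ← Fin.sum_univ_eq_sum_range (fun i => V v i * V c i) n]
    exact Finset.sum_congr rfl fun i _ => by simp [hV, i.isLt]
  -- cum as range sums
  have hcum : ∀ (v : Fin n → ℤ) (k : Fin n),
      cum v k = ∑ i ∈ Finset.range (k.val + 1), V v i := by
    intro v k
    have e1 : cum v k = ∑ i : Fin n, if i ≤ k then v i else 0 := by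
      rw [cum, ← Finset.sum_filter]
      apply Finset.sum_congr _ (fun i _ => rfl)
      ext i; simp
    have e2 : (∑ i : Fin n, if i ≤ k then v i else 0) =
        ∑ i ∈ Finset.range n, (if i ≤ k.val then V v i else 0) := by
      rw [← Fin.sum_univ_eq_sum_range (fun i => if i ≤ k.val then V v i else 0) n]
      refine Finset.sum_congr rfl fun i _ => ?_
      by_cases hik : i ≤ k
      · rw [if_pos hik, if_pos (Fin.le_def.1 hik), hV]
        show v i = if h : (i : ℕ) < n then v ⟨(i : ℕ), h⟩ else 0
        rw [dif_pos i.isLt]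
      · rw [if_neg hik, if_neg (fun hle => hik (Fin.le_def.2 hle))]
    have e3 : (∑ i ∈ Finset.range (k.val + 1), (if i ≤ k.val then V v i else 0)) =
        ∑ i ∈ Finset.range n, (if i ≤ k.val then V v i else 0) := by
      apply Finset.sum_subset (Finset.range_subset_range.2 k.isLt)
      intro i _ hi
      rw [if_neg]
      simpa [Nat.lt_succ_iff] using hi
    have e4 : (∑ i ∈ Finset.range (k.val + 1), (if i ≤ k.val then V v i else 0)) =
        ∑ i ∈ Finset.range (k.val + 1), V v i :=
      Finset.sum_congr rfl fun i hi => if_pos (Nat.lt_succ_iff.1 (Finset.mem_range.1 hi))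
    rw [e1, e2, ← e3, e4]
  -- Abel summation
  have habel : ∀ v : Fin n → ℤ, dotp v c =
      ∑ k ∈ Finset.range n, (∑ i ∈ Finset.range (k + 1), V v i) * D k := by
    intro v
    rw [hdotp v]
    have e1 : ∀ i ∈ Finset.range n, V v i * V c i =
        ∑ k ∈ Finset.Ico i n, V v i * D k := by
      intro i hi
      rw [← Finset.mul_sum, ← hCtel i (Finset.mem_range.1 hi)]
    rw [Finset.sum_congr rfl e1]
    rw [Finset.sum_comm' (t' := Finset.range n) (s' := fun k => Finset.range (k + 1))
      (by intro i k; simp [Nat.lt_succ_iff, Finset.mem_Ico]; omega)]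
    exact Finset.sum_congr rfl fun k _ => by rw [Finset.sum_mul]
  rw [habel x, habel y]
  apply Finset.sum_le_sum
  intro k hk
  have hk' : k < n := Finset.mem_range.1 hk
  have := h ⟨k, hk'⟩
  rw [hcum x ⟨k, hk'⟩, hcum y ⟨k, hk'⟩] at this
  exact mul_le_mul_of_nonneg_right this (hD0 k)


lemma dotp_neg {n : ℕ} (v c : Fin n → ℤ) : dotp (-v) c = -dotp v c := by
  simp [dotp, neg_mul, Finset.sum_neg_distrib]

theorem stmt16 {n : ℕ} (c : Fin n → ℤ) (hc : monoc c) (S S' : Finset (Fin n)) :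
    (0 ≤ dotp (pS S) c →
      (ple (pS S') (-(pS S)) ∨ ple (pS S) (pS S')) →
      |dotp (pS S) c| ≤ |dotp (pS S') c|) ∧
    (dotp (pS S) c ≤ 0 →
      (ple (pS S') (pS S) ∨ ple (-(pS S)) (pS S')) →
      |dotp (pS S) c| ≤ |dotp (pS S') c|) := by
  constructor
  · intro h0 hor
    rw [abs_of_nonneg h0]
    rcases hor with h1 | h1
    · have hk := key _ _ c hc h1
      rw [dotp_neg] at hk
      calc dotp (pS S) c ≤ -(dotp (pS S') c) := by linarith
        _ ≤ |dotp (pS S') c| := neg_le_abs _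
    · exact le_trans (key _ _ c hc h1) (le_abs_self _)
  · intro h0 hor
    rw [abs_of_nonpos h0]
    rcases hor with h1 | h1
    · have hk := key _ _ c hc h1
      calc -dotp (pS S) c ≤ -(dotp (pS S') c) := by linarith
        _ ≤ |dotp (pS S') c| := neg_le_abs _
    · have hk := key _ _ c hc h1
      rw [dotp_neg] at hk
      exact le_trans hk (le_abs_self _)
end

section
/- Let n ≥ 3, let c ∈ ℤ^n satisfy c_1 ≥ c_2 ≥ ⋯ ≥ c_n ≥ 0, and let k be an integer with 0 ≤ k ≤ ℓ. If (−m_k)·c ≥ 0, then (−m_k)·c ≤ |p(S)·c| for every subset S of {1,…,n}; consequently, the subset S₀ with p(S₀) = −m_k is an optimal solution of the partition problem and the optimal value is (−m_k)·c. -/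
open Finset

theorem stmt17 {n : ℕ} (hn : 3 ≤ n) (c : Fin n → ℤ) (hc : monoc c)
    (k : ℕ) (hk : k ≤ (n - 1) / 2) (hpos : 0 ≤ dotp (-(mvec n k)) c) :
    (∀ S : Finset (Fin n), dotp (-(mvec n k)) c ≤ |dotp (pS S) c|) ∧
    ∃ S₀ : Finset (Fin n), pS S₀ = -(mvec n k) ∧
      |dotp (pS S₀) c| = dotp (-(mvec n k)) c := by
  have h2k1 : 2 * k + 1 ≤ n := by omega
  have hkn : k < n := by omega
  set ck : ℤ := c ⟨k, hkn⟩ with hckdef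
  have hneg : dotp (-(mvec n k)) c = - dotp (mvec n k) c := by
    unfold dotp
    rw [← Finset.sum_neg_distrib]
    exact Finset.sum_congr rfl (fun i _ => by simp [neg_mul])
  -- core lemma
  have key : ∀ S : Finset (Fin n),
      k + 1 ≤ (S.filter (fun i => i.val < 2*k+1)).card →
      dotp (-(mvec n k)) c ≤ dotp (pS S) c := by
    intro S hS
    set N := Finset.univ.filter (fun i : Fin n => i ∉ S ∧ k ≤ i.val ∧ i.val < 2*k+1) with hNdef
    set P := S.filter (fun i => i.val < k) with hPdef
    -- cardinality bound
    have hcard : N.card ≤ P.card := by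
      set Sb := S.filter (fun i => k ≤ i.val ∧ i.val < 2*k+1) with hSbdef
      have hb : Sb.card + P.card = (S.filter (fun i => i.val < 2*k+1)).card := by
        have e := Finset.card_filter_add_card_filter_not
          (s := S.filter (fun i => i.val < 2*k+1)) (p := fun i => k ≤ i.val)
        have e1 : (S.filter (fun i => i.val < 2*k+1)).filter (fun i => k ≤ i.val) = Sb := by
          rw [Finset.filter_filter, hSbdef]
          exact Finset.filter_congr (fun i _ => by tauto)
        have e2 : (S.filter (fun i => i.val < 2*k+1)).filter (fun i => ¬ k ≤ i.val) = P := by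
          rw [Finset.filter_filter, hPdef]
          exact Finset.filter_congr (fun i _ => by omega)
        rw [e1, e2] at e
        exact e
      have hdisj : Disjoint N Sb := by
        rw [Finset.disjoint_left]
        intro a haN haSb
        simp only [hNdef, Finset.mem_filter, hSbdef, Finset.mem_univ, true_and] at haN haSb
        exact haN.1 haSb.1
      have hunion : (N ∪ Sb).card ≤ k + 1 := by
        have hmaps : ∀ a ∈ N ∪ Sb, a.val ∈ Finset.Ico k (2*k+1) := by
          intro a ha
          simp only [Finset.mem_union, hNdef, hSbdef, Finset.mem_filter, Finset.mem_univ,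
            true_and] at ha
          rcases ha with h | h <;> simp [Finset.mem_Ico] <;> omega
        have hinj : Set.InjOn (fun a : Fin n => a.val) (N ∪ Sb : Finset (Fin n)) :=
          fun a _ b _ h => Fin.ext h
        have := Finset.card_le_card_of_injOn _ hmaps hinj
        simp [Nat.card_Ico] at this
        omega
      rw [Finset.card_union_of_disjoint hdisj] at hunion
      omega
    -- sum estimates
    have hck0 : 0 ≤ ck := hc.2 _
    have hNsum : ∑ i ∈ N, c i ≤ (N.card : ℤ) * ck := by
      have := Finset.sum_le_card_nsmul N c ck (by
        intro i hi
        simp only [hNdef, Finset.mem_filter, Finset.mem_univ, true_and] at hi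
        exact hc.1 ⟨k, hkn⟩ i (by simpa [Fin.le_def] using hi.2.1))
      simpa [nsmul_eq_mul] using this
    have hPsum : (P.card : ℤ) * ck ≤ ∑ i ∈ P, c i := by
      have := Finset.card_nsmul_le_sum P c ck (by
        intro i hi
        simp only [hPdef, Finset.mem_filter] at hi
        exact hc.1 i ⟨k, hkn⟩ (by simp [Fin.le_def]; omega))
      simpa [nsmul_eq_mul] using this
    have hcard' : (N.card : ℤ) * ck ≤ (P.card : ℤ) * ck :=
      mul_le_mul_of_nonneg_right (by exact_mod_cast hcard) hck0
    -- the difference sum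
    have hsplit : dotp (pS S) c - dotp (-(mvec n k)) c
        = (∑ i ∈ Finset.univ \ N, (pS S i + mvec n k i) * c i)
          + ∑ i ∈ N, (pS S i + mvec n k i) * c i := by
      rw [Finset.sum_sdiff (Finset.subset_univ N), hneg, sub_neg_eq_add]
      unfold dotp
      rw [← Finset.sum_add_distrib]
      exact Finset.sum_congr rfl (fun i _ => by ring)
    have hNeval : ∑ i ∈ N, (pS S i + mvec n k i) * c i = ∑ i ∈ N, (-2) * c i := by
      apply Finset.sum_congr rfl
      intro i hi
      simp only [hNdef, Finset.mem_filter, Finset.mem_univ, true_and] at hi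
      have h1 : pS S i = -1 := by simp [pS, hi.1]
      have h2 : mvec n k i = -1 := by
        unfold mvec
        rw [if_neg (by omega), if_pos (by omega)]
      rw [h1, h2]; ring
    have hPsub : P ⊆ Finset.univ \ N := by
      intro i hi
      simp only [hPdef, Finset.mem_filter] at hi
      simp only [Finset.mem_sdiff, Finset.mem_univ, true_and, hNdef, Finset.mem_filter,
        not_and]
      exact fun h => absurd hi.1 h
    have hg0 : ∀ i ∈ Finset.univ \ N, 0 ≤ (pS S i + mvec n k i) * c i := by
      intro i hi
      simp only [Finset.mem_sdiff, Finset.mem_univ, true_and, hNdef, Finset.mem_filter,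
        not_and] at hi
      have hci := hc.2 i
      by_cases hiS : i ∈ S
      · have h1 : pS S i = 1 := by simp [pS, hiS]
        have h2 : mvec n k i = 1 ∨ mvec n k i = -1 := by
          unfold mvec; split_ifs <;> simp
        rcases h2 with h2 | h2 <;> rw [h1, h2] <;> linarith
      · have h1 : pS S i = -1 := by simp [pS, hiS]
        have hr := hi hiS
        have h2 : mvec n k i = 1 := by
          unfold mvec
          by_cases hik : i.val < k
          · rw [if_pos hik]
          · rw [if_neg hik, if_neg (by omega)]
        rw [h1, h2]; ring_nf; simp
    have hPle : ∑ i ∈ P, (pS S i + mvec n k i) * c i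
        ≤ ∑ i ∈ Finset.univ \ N, (pS S i + mvec n k i) * c i :=
      Finset.sum_le_sum_of_subset_of_nonneg hPsub (fun i hi _ => hg0 i hi)
    have hPeval : ∑ i ∈ P, (pS S i + mvec n k i) * c i = ∑ i ∈ P, 2 * c i := by
      apply Finset.sum_congr rfl
      intro i hi
      simp only [hPdef, Finset.mem_filter] at hi
      have h1 : pS S i = 1 := by simp [pS, hi.1]
      have h2 : mvec n k i = 1 := by unfold mvec; rw [if_pos hi.2]
      rw [h1, h2]; ring
    have hfinal : 0 ≤ dotp (pS S) c - dotp (-(mvec n k)) c := by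
      rw [hsplit, hNeval]
      have e1 : ∑ i ∈ N, (-2 : ℤ) * c i = -2 * ∑ i ∈ N, c i := by
        rw [Finset.mul_sum]
      have e2 : ∑ i ∈ P, (2 : ℤ) * c i = 2 * ∑ i ∈ P, c i := by
        rw [Finset.mul_sum]
      rw [hPeval, e2] at hPle
      rw [e1]
      linarith
    linarith
  -- counting the first `2k+1` indices
  have htot : 2*k+1 ≤ (Finset.univ.filter (fun i : Fin n => i.val < 2*k+1)).card := by
    have hmaps : ∀ j ∈ Finset.range (2*k+1),
        (⟨j % n, Nat.mod_lt _ (by omega)⟩ : Fin n) ∈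
          Finset.univ.filter (fun i : Fin n => i.val < 2*k+1) := by
      intro j hj
      simp only [Finset.mem_range] at hj
      simp only [Finset.mem_filter, Finset.mem_univ, true_and]
      simpa [Nat.mod_eq_of_lt (by omega : j < n)] using hj
    have hinj : Set.InjOn (fun j => (⟨j % n, Nat.mod_lt _ (by omega)⟩ : Fin n))
        (Finset.range (2*k+1)) := by
      intro a ha b hb h
      simp only [Finset.coe_range, Set.mem_Iio] at ha hb
      have := congrArg Fin.val h
      simp only at this
      rwa [Nat.mod_eq_of_lt (by omega), Nat.mod_eq_of_lt (by omega)] at this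
    have := Finset.card_le_card_of_injOn _ hmaps hinj
    simpa using this
  have hadd : ∀ S : Finset (Fin n),
      (S.filter (fun i => i.val < 2*k+1)).card + (Sᶜ.filter (fun i => i.val < 2*k+1)).card
        = (Finset.univ.filter (fun i : Fin n => i.val < 2*k+1)).card := by
    intro S
    have e := Finset.card_filter_add_card_filter_not
      (s := Finset.univ.filter (fun i : Fin n => i.val < 2*k+1)) (p := fun i => i ∈ S)
    have e1 : (Finset.univ.filter (fun i : Fin n => i.val < 2*k+1)).filter (fun i => i ∈ S)
        = S.filter (fun i => i.val < 2*k+1) := by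
      ext i; simp [Finset.mem_filter]; tauto
    have e2 : (Finset.univ.filter (fun i : Fin n => i.val < 2*k+1)).filter (fun i => i ∉ S)
        = Sᶜ.filter (fun i => i.val < 2*k+1) := by
      ext i; simp [Finset.mem_filter]; tauto
    rw [e1, e2] at e
    exact e
  have hcompl : ∀ S : Finset (Fin n), dotp (pS Sᶜ) c = - dotp (pS S) c := by
    intro S
    unfold dotp
    rw [← Finset.sum_neg_distrib]
    apply Finset.sum_congr rfl
    intro i _
    by_cases h : i ∈ S <;> simp [pS, h]
  constructor
  · intro S
    by_cases hS : k + 1 ≤ (S.filter (fun i => i.val < 2*k+1)).card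
    · exact le_trans (key S hS) (le_abs_self _)
    · have hSc : k + 1 ≤ (Sᶜ.filter (fun i => i.val < 2*k+1)).card := by
        have := hadd S
        omega
      have h1 := key Sᶜ hSc
      rw [hcompl S] at h1
      exact le_trans h1 (neg_le_abs _)
  · have hS0 : pS (Finset.univ.filter (fun i : Fin n => k ≤ i.val ∧ i.val < 2*k+1))
        = -(mvec n k) := by
      funext i
      simp only [pS, mvec, Finset.mem_filter, Finset.mem_univ, true_and, Pi.neg_apply]
      by_cases h1 : i.val < k
      · rw [if_neg (by omega), if_pos h1]
      · by_cases h2 : i.val < 2*k+1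
        · rw [if_pos ⟨by omega, h2⟩, if_neg h1, if_pos h2]; norm_num
        · rw [if_neg (by omega), if_neg h1, if_neg h2]
    exact ⟨_, hS0, by rw [hS0]; exact abs_of_nonneg hpos⟩
end
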